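/- For every natural number n ≥ 1 and every configuration g : {0, 1, …, 2n} → Bool: if g is reachable from the all-false configuration on {0, …, 2n} via Ξ̂(0,n), then g is also reachable from the all-true configuration on {0, …, 2n} via Ξ̂(0,n). -/

import Mathlib

namespace Nicolai

/-- Configurations on the finite interval `S = {a, …, b}` of integers:
`true` = occupied, `false` = empty. -/
abbrev Config (a b : ℤ) : Type := {i : ℤ // i ∈ Finset.Icc a b} → Bool

/-- The Hilbert space `ℋ_S` with orthonormal basis indexed by configurations. -/
abbrev Hs (a b : ℤ) : Type := EuclideanSpace ℂ (Config a b)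

/-- The basis vector `e_g` associated to the configuration `g`. -/
noncomputable def e (a b : ℤ) (g : Config a b) : Hs a b := EuclideanSpace.single g 1

/-- The Jordan–Wigner sign exponent: the number of occupied sites strictly to the left of `i`. -/
noncomputable def signCount (a b : ℤ) (g : Config a b) (i : ℤ) : ℕ :=
  (Finset.univ.filter fun j : {x : ℤ // x ∈ Finset.Icc a b} => j.1 < i ∧ g j = true).card

/-- The annihilation operator `c_i` (zero if `i ∉ S`). -/
noncomputable def cAnn (a b : ℤ) (i : ℤ) : Module.End ℂ (Hs a b) where
  toFun ψ := WithLp.toLp 2 <| fun g =>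
    if hi : i ∈ Finset.Icc a b then
      if g ⟨i, hi⟩ = false then
        ((-1 : ℂ) ^ signCount a b g i) * ψ (Function.update g ⟨i, hi⟩ true)
      else 0
    else 0
  map_add' ψ φ := by
    ext g
    simp only [PiLp.add_apply, PiLp.toLp_apply]
    split_ifs <;> simp [mul_add]
  map_smul' c ψ := by
    ext g
    simp only [PiLp.smul_apply, PiLp.toLp_apply, smul_eq_mul, RingHom.id_apply]
    split_ifs <;> ring

/-- The creation operator `c*_i` (zero if `i ∉ S`). -/
noncomputable def cCr (a b : ℤ) (i : ℤ) : Module.End ℂ (Hs a b) where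
  toFun ψ := WithLp.toLp 2 <| fun g =>
    if hi : i ∈ Finset.Icc a b then
      if g ⟨i, hi⟩ = true then
        ((-1 : ℂ) ^ signCount a b g i) * ψ (Function.update g ⟨i, hi⟩ false)
      else 0
    else 0
  map_add' ψ φ := by
    ext g
    simp only [PiLp.add_apply, PiLp.toLp_apply]
    split_ifs <;> simp [mul_add]
  map_smul' c ψ := by
    ext g
    simp only [PiLp.smul_apply, PiLp.toLp_apply, smul_eq_mul, RingHom.id_apply]
    split_ifs <;> ring

/-- `q_{2i} = c_{2i+1} c*_{2i} c_{2i−1}`. -/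
noncomputable def qOp (a b i : ℤ) : Module.End ℂ (Hs a b) :=
  cAnn a b (2 * i + 1) * cCr a b (2 * i) * cAnn a b (2 * i - 1)

/-- The Nicolai supercharge `Q[k,l] = Σ_{i=k}^{l} q_{2i}`. -/
noncomputable def QNic (a b k l : ℤ) : Module.End ℂ (Hs a b) :=
  ∑ i ∈ Finset.Icc k l, qOp a b i

/-- Membership in `Ξ̂_{k,l}`: a `{−1,+1}`-valued function on `{2k, …, 2l}` with no
forbidden sign triplet at interior even sites, constant on each two-site edge. -/
def memXi (k l : ℤ) (f : ℤ → ℤ) : Prop :=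
  (∀ i ∈ Finset.Icc (2 * k) (2 * l), f i = 1 ∨ f i = -1) ∧
  (∀ i : ℤ, k < i → i < l →
    ¬(f (2 * i - 1) = -1 ∧ f (2 * i) = 1 ∧ f (2 * i + 1) = -1) ∧
    ¬(f (2 * i - 1) = 1 ∧ f (2 * i) = -1 ∧ f (2 * i + 1) = 1)) ∧
  f (2 * k) = f (2 * k + 1) ∧ f (2 * l - 1) = f (2 * l)

/-- `ζ_i(+1) = c*_i`, `ζ_i(−1) = c_i`. -/
noncomputable def zeta (a b i : ℤ) (v : ℤ) : Module.End ℂ (Hs a b) :=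
  if v = 1 then cCr a b i else if v = -1 then cAnn a b i else 0

/-- The local fermion operator `Q(f) = ζ_{2k}(f(2k)) ζ_{2k+1}(f(2k+1)) ⋯ ζ_{2l}(f(2l))`,
the product taken in increasing site order. -/
noncomputable def QF (a b k l : ℤ) (f : ℤ → ℤ) : Module.End ℂ (Hs a b) :=
  ((List.range (2 * l - 2 * k + 1).toNat).map
    (fun j => zeta a b (2 * k + (j : ℤ)) (f (2 * k + (j : ℤ))))).prod

/-- `g` has a forbidden triplet at the even site `2i`. -/
def forbiddenAt (g : ℤ → Bool) (i : ℤ) : Prop :=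
  (g (2 * i - 1) = false ∧ g (2 * i) = true ∧ g (2 * i + 1) = false) ∨
  (g (2 * i - 1) = true ∧ g (2 * i) = false ∧ g (2 * i + 1) = true)

/-- Membership in `Υ̂_{k,l}`: no forbidden triplet at interior even sites and the
open SUSY boundary condition (only the values on `{2k, …, 2l}` are relevant). -/
def memUps (k l : ℤ) (g : ℤ → Bool) : Prop :=
  (∀ i : ℤ, k < i → i < l → ¬ forbiddenAt g i) ∧
  g (2 * k) = g (2 * k + 1) ∧ g (2 * l - 1) = g (2 * l)

/-- Extend a configuration on `S` to all of `ℤ` by `false`. -/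
noncomputable def ext (a b : ℤ) (g : Config a b) : ℤ → Bool :=
  fun i => if h : i ∈ Finset.Icc a b then g ⟨i, h⟩ else false

/-- The charge `f ∈ Ξ̂_{k,l}` is applicable to the configuration `g`. -/
def applicable (k l : ℤ) (f : ℤ → ℤ) (g : ℤ → Bool) : Prop :=
  ∀ i : ℤ, 2 * k ≤ i → i ≤ 2 * l → (f i = 1 → g i = false) ∧ (f i = -1 → g i = true)

/-- The configuration `f·g` resulting from the action of the charge `f ∈ Ξ̂_{k,l}` on `g`. -/
def applyCharge (k l : ℤ) (f : ℤ → ℤ) (g : ℤ → Bool) : ℤ → Bool :=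
  fun i => if 2 * k ≤ i ∧ i ≤ 2 * l then decide (f i = 1) else g i

/-- `Reachable p q g₀ g`: `g` is obtained from `g₀` by finitely many applications of
applicable charges from `Ξ̂(p,q) = ⋃_{p ≤ k < l ≤ q} Ξ̂_{k,l}`. -/
inductive Reachable (p q : ℤ) : (ℤ → Bool) → (ℤ → Bool) → Prop
  | refl (g : ℤ → Bool) : Reachable p q g g
  | step {g₀ g : ℤ → Bool} (k l : ℤ) (f : ℤ → ℤ) :
      Reachable p q g₀ g → p ≤ k → k < l → l ≤ q → memXi k l f → applicable k l f g →
      Reachable p q g₀ (applyCharge k l f g)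

/-- The fermion parity operator `P e_g = (−1)^{#occupied sites} e_g`. -/
noncomputable def parity (a b : ℤ) : Module.End ℂ (Hs a b) where
  toFun ψ := WithLp.toLp 2 <| fun g =>
    ((-1 : ℂ) ^ (Finset.univ.filter fun j : {x : ℤ // x ∈ Finset.Icc a b} => g j = true).card)
      * ψ g
  map_add' ψ φ := by
    ext g
    simp only [PiLp.add_apply, PiLp.toLp_apply]
    ring
  map_smul' c ψ := by
    ext g
    simp only [PiLp.smul_apply, PiLp.toLp_apply, smul_eq_mul, RingHom.id_apply]
    ring

theorem Reachable.trans {p q : ℤ} {g₀ g₁ g₂ : ℤ → Bool}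
    (h₁ : Reachable p q g₀ g₁) (h₂ : Reachable p q g₁ g₂) : Reachable p q g₀ g₂ := by
  induction h₂ with
  | refl => exact h₁
  | step k l f _ hpk hkl hlq hf happ ih => exact .step k l f ih hpk hkl hlq hf happ

theorem memXi_const_neg_one (k l : ℤ) : memXi k l fun _ => -1 :=
  ⟨fun _ _ => Or.inr rfl, fun _ _ _ => ⟨by norm_num, by norm_num⟩, rfl, rfl⟩

theorem applicable_const_neg_one {k l : ℤ} {g : ℤ → Bool}
    (hg : ∀ i, 2 * k ≤ i → i ≤ 2 * l → g i = true) : applicable k l (fun _ => -1) g :=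
  fun i hki hil => ⟨by norm_num, fun _ => hg i hki hil⟩

theorem applyCharge_const_neg_one_occupied_block (k l : ℤ) :
    applyCharge k l (fun _ => -1) (fun i => decide (2 * k ≤ i ∧ i ≤ 2 * l)) = fun _ => false := by
  funext i
  by_cases hi : 2 * k ≤ i ∧ i ≤ 2 * l <;> simp [applyCharge, hi]

theorem Reachable.occupied_block_to_empty {p q : ℤ} (hpq : p < q) :
    Reachable p q (fun i => decide (2 * p ≤ i ∧ i ≤ 2 * q)) fun _ => false := by
  have hstep := Reachable.step p q (fun _ => -1)
    (.refl fun i => decide (2 * p ≤ i ∧ i ≤ 2 * q)) le_rfl hpq le_rfl (memXi_const_neg_one p q)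
    (applicable_const_neg_one fun i hpi hiq => decide_eq_true ⟨hpi, hiq⟩)
  rwa [applyCharge_const_neg_one_occupied_block] at hstep

/-- reachability from the all-false configuration on `{0, …, 2n}` via
`Ξ̂(0,n)` implies reachability from the all-true configuration on `{0, …, 2n}`. -/
theorem reachable_from_fock_implies_reachable_from_occupied (n : ℕ) (hn : 1 ≤ n)
    (g : ℤ → Bool) (h : Reachable 0 (n : ℤ) (fun _ => false) g) :
    Reachable 0 (n : ℤ) (fun i => decide (0 ≤ i ∧ i ≤ 2 * (n : ℤ))) g := by
  have hempty := Reachable.occupied_block_to_empty (p := 0) (q := n) (by exact_mod_cast hn)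
  rw [mul_zero] at hempty
  exact hempty.trans h

end Nicolai
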